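/- arXiv:2504.14617 — 2 statements merged into one kernel-verified Lean document; each statement's English description precedes it below -/
import Mathlib

section
/- Let L_{ij} (for i in {1,2,3,4}, j in {5,6}) be eight lines in a set such that two lines L_{ij} and L_{kl} meet if and only if i≠k and j≠l (i.e., L_{ij}∩L_{kl}=∅ whenever i=k or j=l, and |L_{ij}∩L_{kl}|=1 otherwise). Then there is no set Z of 5 points such that every line L_{ij} contains exactly 2 points of Z. -/
/-! Two lines with the same second index are disjoint, so a point lies on at most two of the
eight lines, one for each second index. Counting incidences between `Z` and the lines then gives
`8 * 2 ≤ 5 * 2`. -/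

open Finset

theorem card_filter_mem_le_of_disjoint_on_fibers {ι κ P : Type*} [Fintype κ] {L : ι → Set P}
    (f : ι → κ) (hL : ∀ a b, f a = f b → a ≠ b → Disjoint (L a) (L b)) (s : Finset ι) (p : P)
    [DecidablePred (p ∈ L ·)] : #{i ∈ s | p ∈ L i} ≤ Fintype.card κ := by
  rw [← card_univ]
  refine card_le_card_of_injOn f (fun _ _ ↦ mem_coe.2 (mem_univ _)) fun a ha b hb hab ↦ ?_
  by_contra hne
  exact Set.disjoint_left.1 (hL a b hab hne) (mem_filter.1 ha).2 (mem_filter.1 hb).2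

theorem stmt_0_general {P : Type*} (L : Fin 4 → Fin 2 → Set P)
    (hdisj : ∀ (i k : Fin 4) (j l : Fin 2), (i = k ∨ j = l) → (i, j) ≠ (k, l) →
      L i j ∩ L k l = ∅) :
    ¬ ∃ Z : Set P, Z.Finite ∧ Z.ncard = 5 ∧ ∀ i j, (Z ∩ L i j).ncard = 2 := by
  classical
  rintro ⟨Z, hfin, hcard, hline⟩
  obtain ⟨Z, rfl⟩ := hfin.exists_finset_coe
  let incident (ij : Fin 4 × Fin 2) (p : P) : Prop := p ∈ Function.uncurry L ij
  have hZ : #Z = 5 := by rwa [Set.ncard_coe_finset] at hcard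
  have hline_card (ij : Fin 4 × Fin 2) : #(Z.bipartiteAbove incident ij) = 2 := by
    rw [← Set.ncard_coe_finset, bipartiteAbove, coe_filter]
    exact hline ij.1 ij.2
  have hpoint_card (p : P) (_ : p ∈ Z) : #(univ.bipartiteBelow incident p) ≤ 2 :=
    card_filter_mem_le_of_disjoint_on_fibers Prod.snd (fun a b hab hne ↦
      Set.disjoint_iff_inter_eq_empty.2 (hdisj a.1 b.1 a.2 b.2 (Or.inr hab) hne)) univ p
  have hcount := card_mul_le_card_mul incident (fun ij _ ↦ (hline_card ij).ge) hpoint_card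
  simp [hZ] at hcount

/-- Eight lines `L i j` (i ∈ {1,2,3,4}, j ∈ {5,6}) in an abstract incidence
setting: `L i j` and `L k l` are disjoint whenever they share an index coordinate
(and are distinct), and meet in exactly one point otherwise.  Then there is no set `Z`
of 5 points such that every line contains exactly 2 points of `Z`. -/
theorem stmt_0 {P : Type*} (L : Fin 4 → Fin 2 → Set P)
    (hdisj : ∀ (i k : Fin 4) (j l : Fin 2), (i = k ∨ j = l) → (i, j) ≠ (k, l) →
      L i j ∩ L k l = ∅)
    (hmeet : ∀ (i k : Fin 4) (j l : Fin 2), i ≠ k → j ≠ l → (L i j ∩ L k l).ncard = 1) :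
    ¬ ∃ Z : Set P, Z.Finite ∧ Z.ncard = 5 ∧ ∀ i j, (Z ∩ L i j).ncard = 2 :=
  stmt_0_general L hdisj
end

section
/- Let a, b_1,...,b_6 be integers with 3a + Σ_{i=1}^6 b_i = 0 and for all 1 ≤ i < j ≤ 6, a + b_i + b_j ≤ 1 and 2a + (sum of the four b_k with k ∉ {i,j}) ≤ 0. Then a + b_i + b_j = 0 for all 1 ≤ i < j ≤ 6. -/
/-!
Write `S i j = a + b i + b j`. Since `∑ b = -3a`, the hypothesis on the four-element sums says
exactly `S i j ≥ 0`. Summing `S i j` over all ordered pairs `i ≠ j` gives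
`(n - 1) (n a + 2 ∑ b) = 10 (3a + ∑ b) = 0` for `n = 6`, so all these nonnegative terms vanish.
-/

open Finset

lemma Finset.sum_univ_sdiff_pair {ι M : Type*} [Fintype ι] [DecidableEq ι] [AddCommGroup M]
    {i j : ι} (hij : i ≠ j) (f : ι → M) :
    ∑ k ∈ univ \ {i, j}, f k = ∑ k, f k - (f i + f j) := by
  rw [sum_sdiff_eq_sub (subset_univ _), sum_pair hij]

lemma Finset.sum_sum_erase_add_add {ι R : Type*} [Fintype ι] [DecidableEq ι] [CommRing R]
    (a : R) (b : ι → R) :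
    ∑ i, ∑ j ∈ univ.erase i, (a + b i + b j) =
      (Fintype.card ι - 1) * (Fintype.card ι * a + 2 * ∑ i, b i) := by
  simp only [sum_erase_eq_sub (mem_univ _), sum_sub_distrib, sum_add_distrib, sum_const,
    card_univ, nsmul_eq_mul, ← mul_sum]
  ring

lemma Finset.eq_zero_of_sum_sum_erase_eq_zero {ι M : Type*} [Fintype ι] [DecidableEq ι]
    [AddCommMonoid M] [PartialOrder M] [IsOrderedAddMonoid M] {f : ι → ι → M}
    (hf : ∀ i j, i ≠ j → 0 ≤ f i j) (h : ∑ i, ∑ j ∈ univ.erase i, f i j = 0) {i j : ι}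
    (hij : i ≠ j) : f i j = 0 := by
  have hf' : ∀ i, ∀ j ∈ univ.erase i, 0 ≤ f i j := fun i j hj => hf i j (ne_of_mem_erase hj).symm
  have hrow := (sum_eq_zero_iff_of_nonneg fun i _ => sum_nonneg (hf' i)).1 h i (mem_univ i)
  exact (sum_eq_zero_iff_of_nonneg (hf' i)).1 hrow j (mem_erase.2 ⟨hij.symm, mem_univ j⟩)

theorem stmt_3_general (a : ℤ) (b : Fin 6 → ℤ)
    (hsum : 3 * a + ∑ i, b i = 0)
    (h2 : ∀ i j : Fin 6, i < j → 2 * a + ∑ k ∈ Finset.univ \ {i, j}, b k ≤ 0) :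
    ∀ i j : Fin 6, i < j → a + b i + b j = 0 := by
  have hlt : ∀ i j : Fin 6, i < j → 0 ≤ a + b i + b j := fun i j hij => by
    have := h2 i j hij
    rw [sum_univ_sdiff_pair hij.ne] at this
    linarith
  have hne : ∀ i j : Fin 6, i ≠ j → 0 ≤ a + b i + b j := fun i j hij =>
    hij.lt_or_gt.elim (hlt i j) fun hgt => by linarith [hlt j i hgt]
  have htotal : ∑ i, ∑ j ∈ univ.erase i, (a + b i + b j) = 0 := by
    rw [sum_sum_erase_add_add, Fintype.card_fin]
    linear_combination 10 * hsum
  exact fun i j hij => eq_zero_of_sum_sum_erase_eq_zero hne htotal hij.ne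

/-- Integers a, b₁,…,b₆ with 3a + Σbᵢ = 0, and for all i < j:
a + bᵢ + bⱼ ≤ 1 and 2a + (sum of the four bₖ with k ∉ {i,j}) ≤ 0.
Then a + bᵢ + bⱼ = 0 for all i < j. -/
theorem stmt_3 (a : ℤ) (b : Fin 6 → ℤ)
    (hsum : 3 * a + ∑ i, b i = 0)
    (h1 : ∀ i j : Fin 6, i < j → a + b i + b j ≤ 1)
    (h2 : ∀ i j : Fin 6, i < j → 2 * a + ∑ k ∈ Finset.univ \ {i, j}, b k ≤ 0) :
    ∀ i j : Fin 6, i < j → a + b i + b j = 0 :=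
  stmt_3_general a b hsum h2
end
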